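/- arXiv:1204.4526 — 2 statements merged into one kernel-verified Lean document; each statement's English description precedes it below -/
import Mathlib

section
/- If f : 2^U → ℝ is normalized, monotone, and submodular, then for every A ⊆ U, f(A) ≤ g(A) ≤ (c e^c/(e^c−1)) · H_{|A|} · f(A), where g(A) = ∑_{B ⊆ A} m_{|A|−1,|B|−1} f(B). -/
open MeasureTheory Real Finset

noncomputable def mcoef (c : ℝ) (a b : ℤ) : ℝ :=
  if a < 0 ∨ b < 0 then 0
  else ∫ p in (0:ℝ)..1,
    (c * Real.exp (c * p) / (Real.exp c - 1)) * p ^ b.toNat * (1 - p) ^ (a - b).toNat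

noncomputable def harm (k : ℕ) : ℝ := ∑ t ∈ Finset.range k, (1 : ℝ) / (t + 1)

noncomputable def gfun (c : ℝ) {U : Type*} [DecidableEq U] (f : Finset U → ℝ)
    (A : Finset U) : ℝ :=
  ∑ B ∈ A.powerset, mcoef c ((A.card : ℤ) - 1) ((B.card : ℤ) - 1) * f B

/-!
With `w(p) = c e^{cp} / (e^c - 1)`, a probability density on `[0, 1]` when `c > 0`, the
coefficients of `g` are moments of `w`, so that `g(A) = ∫₀¹ w(p) G_p(A) dp` with
`G_p(A) = ∑_{∅ ≠ B ⊆ A} p^{|B|-1} (1-p)^{|A|-|B|} f(B)`.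

Peeling off one element at a time, `G_p(A ∪ {x}) = (1-p) G_p(A) + F_x(p 𝟙_A)`, where `F_x` is the
multilinear extension of the submodular function `B ↦ f(B ∪ {x})`. Concavity of a submodular
multilinear extension along `p ↦ p 𝟙_A` gives `F_x(p 𝟙_A) ≥ p f(A ∪ {x}) + (1-p) f({x})`, and
then `f(A) ≤ G_p(A)` for every `p ∈ [0, 1]` by induction; integrating against `w` gives the lower
bound. For the upper bound, monotonicity gives `G_p(A) ≤ (∑_{t < |A|} (1-p)^t) f(A)`, and
`w(p) ≤ w(1)`; finally `∫₀¹ ∑_{t < n} (1-p)^t dp = H_n`.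
-/

section

variable {R U : Type*}

def IsSubmodular [DecidableEq U] [Add R] [LE R] (h : Finset U → R) : Prop :=
  ∀ S T, h (S ∪ T) + h (S ∩ T) ≤ h S + h T

/-- The multilinear extension of `h` evaluated at `p • 𝟙_A`. -/
def multilinearExt [CommRing R] (p : R) (h : Finset U → R) (A : Finset U) : R :=
  ∑ B ∈ A.powerset, p ^ B.card * (1 - p) ^ (A.card - B.card) * h B

def gWeight [CommRing R] (p : R) (n k : ℕ) : R :=
  if k = 0 then 0 else p ^ (k - 1) * (1 - p) ^ (n - k)

def gIntegrand [CommRing R] (p : R) (h : Finset U → R) (A : Finset U) : R :=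
  ∑ B ∈ A.powerset, gWeight p A.card B.card * h B

namespace IsSubmodular

variable [Add R] [LE R] [DecidableEq U] {h : Finset U → R}

lemma comp_insert (hh : IsSubmodular h) (x : U) : IsSubmodular fun B => h (insert x B) := by
  intro S T
  simpa only [insert_union_distrib, insert_inter_distrib] using hh (insert x S) (insert x T)

lemma insert_add_empty_le (hh : IsSubmodular h) {x : U} {A : Finset U} (hx : x ∉ A) :
    h (insert x A) + h ∅ ≤ h A + h {x} := by
  simpa only [union_singleton, inter_singleton_of_notMem hx] using hh A {x}

end IsSubmodular

section Combinatorics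

variable [CommRing R] {p : R} {x : U} {A : Finset U}

lemma multilinearExt_insert [DecidableEq U] (h : Finset U → R) (hx : x ∉ A) :
    multilinearExt p h (insert x A) =
      (1 - p) * multilinearExt p h A + p * multilinearExt p (fun B => h (insert x B)) A := by
  rw [multilinearExt, sum_powerset_insert hx, card_insert_of_notMem hx, multilinearExt,
    multilinearExt, mul_sum, mul_sum]
  congr 1 <;> refine sum_congr rfl fun B hB => ?_
  · rw [show A.card + 1 - B.card = A.card - B.card + 1 by
      have := card_le_card (mem_powerset.1 hB); omega]
    ring
  · rw [card_insert_of_notMem fun hxB => hx (mem_powerset.1 hB hxB), Nat.add_sub_add_right]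
    ring

lemma multilinearExt_one (p : R) (A : Finset U) : multilinearExt p (fun _ => 1) A = 1 := by
  simp [multilinearExt, sum_pow_mul_eq_add_pow]

lemma gWeight_succ_of_le {n k : ℕ} (hkn : k ≤ n) :
    gWeight p (n + 1) k = (1 - p) * gWeight p n k := by
  unfold gWeight
  split_ifs
  · ring
  · rw [show n + 1 - k = n - k + 1 by omega]
    ring

lemma gWeight_succ_succ (n k : ℕ) : gWeight p (n + 1) (k + 1) = p ^ k * (1 - p) ^ (n - k) := by
  simp [gWeight]

lemma gIntegrand_insert [DecidableEq U] (h : Finset U → R) (hx : x ∉ A) :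
    gIntegrand p h (insert x A) =
      (1 - p) * gIntegrand p h A + multilinearExt p (fun B => h (insert x B)) A := by
  rw [gIntegrand, sum_powerset_insert hx, card_insert_of_notMem hx, gIntegrand, mul_sum]
  congr 1 <;> refine sum_congr rfl fun B hB => ?_
  · rw [gWeight_succ_of_le (card_le_card (mem_powerset.1 hB))]
    ring
  · rw [card_insert_of_notMem fun hxB => hx (mem_powerset.1 hB hxB), gWeight_succ_succ]

lemma gIntegrand_one [DecidableEq U] (p : R) (A : Finset U) :
    gIntegrand p (fun _ => 1) A = ∑ t ∈ range A.card, (1 - p) ^ t := by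
  induction A using Finset.induction_on with
  | empty => simp [gIntegrand, gWeight]
  | insert x A hx ih =>
    rw [gIntegrand_insert _ hx, ih, multilinearExt_one, card_insert_of_notMem hx, geom_sum_succ]

end Combinatorics

section Inequalities

variable [CommRing R] [LinearOrder R] [IsStrictOrderedRing R] {p : R}

lemma gWeight_nonneg (hp0 : 0 ≤ p) (hp1 : p ≤ 1) (n k : ℕ) : 0 ≤ gWeight p n k := by
  unfold gWeight
  split_ifs
  · exact le_rfl
  · exact mul_nonneg (pow_nonneg hp0 _) (pow_nonneg (sub_nonneg.2 hp1) _)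

lemma le_multilinearExt [DecidableEq U] {h : Finset U → R} (hh : IsSubmodular h) (hp0 : 0 ≤ p)
    (hp1 : p ≤ 1) (A : Finset U) : p * h A + (1 - p) * h ∅ ≤ multilinearExt p h A := by
  induction A using Finset.induction_on generalizing h with
  | empty => simpa [multilinearExt] using le_of_eq (by ring)
  | insert x A hx ih =>
    have hq : 0 ≤ 1 - p := sub_nonneg.2 hp1
    have ih₁ := mul_le_mul_of_nonneg_left (ih hh) hq
    have ih₂ := mul_le_mul_of_nonneg_left (ih (hh.comp_insert x)) hp0
    have key := mul_le_mul_of_nonneg_left (hh.insert_add_empty_le hx) (mul_nonneg hp0 hq)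
    rw [insert_empty] at ih₂
    rw [multilinearExt_insert h hx]
    linarith

lemma le_gIntegrand [DecidableEq U] {f : Finset U → R} (hf : IsSubmodular f) (hf₀ : f ∅ = 0)
    (hp0 : 0 ≤ p) (hp1 : p ≤ 1) (A : Finset U) : f A ≤ gIntegrand p f A := by
  induction A using Finset.induction_on with
  | empty => simp [gIntegrand, gWeight, hf₀]
  | insert x A hx ih =>
    have hq : 0 ≤ 1 - p := sub_nonneg.2 hp1
    have ih₁ := mul_le_mul_of_nonneg_left ih hq
    have hext := le_multilinearExt (hf.comp_insert x) hp0 hp1 A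
    have key := mul_le_mul_of_nonneg_left (hf.insert_add_empty_le hx) hq
    rw [insert_empty] at hext
    rw [hf₀, add_zero] at key
    rw [gIntegrand_insert f hx]
    linarith

lemma gIntegrand_nonneg {f : Finset U → R} (hp0 : 0 ≤ p) (hp1 : p ≤ 1) {A : Finset U}
    (hf : ∀ B ⊆ A, 0 ≤ f B) : 0 ≤ gIntegrand p f A :=
  sum_nonneg fun B hB => mul_nonneg (gWeight_nonneg hp0 hp1 _ _) (hf B (mem_powerset.1 hB))

lemma gIntegrand_le [DecidableEq U] {f : Finset U → R} (hp0 : 0 ≤ p) (hp1 : p ≤ 1)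
    {A : Finset U} (hf : ∀ B ⊆ A, f B ≤ f A) :
    gIntegrand p f A ≤ (∑ t ∈ range A.card, (1 - p) ^ t) * f A := by
  rw [← gIntegrand_one, gIntegrand, gIntegrand, sum_mul]
  refine sum_le_sum fun B hB => ?_
  rw [mul_one]
  exact mul_le_mul_of_nonneg_left (hf B (mem_powerset.1 hB)) (gWeight_nonneg hp0 hp1 _ _)

end Inequalities

section Integrals

noncomputable def expDensity (c p : ℝ) : ℝ := c * exp (c * p) / (exp c - 1)

@[fun_prop]
lemma continuous_expDensity (c : ℝ) : Continuous (expDensity c) := by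
  unfold expDensity
  fun_prop

lemma expDensity_nonneg {c : ℝ} (hc : 0 ≤ c) (p : ℝ) : 0 ≤ expDensity c p :=
  div_nonneg (mul_nonneg hc (exp_pos _).le) (by linarith [add_one_le_exp c])

lemma monotone_expDensity {c : ℝ} (hc : 0 ≤ c) : Monotone (expDensity c) := by
  intro p q hpq
  unfold expDensity
  gcongr
  linarith [add_one_le_exp c]

lemma integral_expDensity {c : ℝ} (hc : c ≠ 0) : ∫ p in (0 : ℝ)..1, expDensity c p = 1 := by
  have hE : exp c - 1 ≠ 0 := by
    rw [sub_ne_zero, Ne, exp_eq_one_iff]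
    exact hc
  simp only [expDensity, intervalIntegral.integral_div, intervalIntegral.integral_const_mul,
    intervalIntegral.integral_comp_mul_left exp hc, integral_exp, mul_zero, mul_one, exp_zero,
    smul_eq_mul]
  field_simp

@[fun_prop]
lemma continuous_gWeight (n k : ℕ) : Continuous fun p : ℝ => gWeight p n k := by
  unfold gWeight
  split_ifs <;> fun_prop

@[fun_prop]
lemma continuous_gIntegrand (f : Finset U → ℝ) (A : Finset U) :
    Continuous fun p => gIntegrand p f A := by
  unfold gIntegrand
  fun_prop

lemma mcoef_eq_integral (c : ℝ) {n k : ℕ} (hkn : k ≤ n) :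
    mcoef c ((n : ℤ) - 1) ((k : ℤ) - 1) = ∫ p in (0 : ℝ)..1, expDensity c p * gWeight p n k := by
  rcases Nat.eq_zero_or_pos k with rfl | hk
  · simp [mcoef, gWeight]
  · rw [mcoef, if_neg (by omega), show ((k : ℤ) - 1).toNat = k - 1 by omega,
      show ((n : ℤ) - 1 - ((k : ℤ) - 1)).toNat = n - k by omega]
    refine intervalIntegral.integral_congr fun p _ => ?_
    simp only [expDensity, gWeight, if_neg hk.ne']
    ring

lemma gfun_eq_integral [DecidableEq U] (c : ℝ) (f : Finset U → ℝ) (A : Finset U) :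
    gfun c f A = ∫ p in (0 : ℝ)..1, expDensity c p * gIntegrand p f A := by
  simp_rw [gIntegrand, mul_sum]
  rw [intervalIntegral.integral_finsetSum fun B _ =>
    Continuous.intervalIntegrable (by fun_prop) _ _]
  refine sum_congr rfl fun B hB => ?_
  rw [mcoef_eq_integral c (card_le_card (mem_powerset.1 hB)),
    ← intervalIntegral.integral_mul_const]
  simp only [mul_assoc]

lemma integral_geom_sum_one_sub (n : ℕ) :
    ∫ p in (0 : ℝ)..1, ∑ t ∈ range n, (1 - p) ^ t = harm n := by
  rw [intervalIntegral.integral_finsetSum fun t _ =>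
    Continuous.intervalIntegrable (by fun_prop) _ _, harm]
  refine sum_congr rfl fun t _ => ?_
  simp [intervalIntegral.integral_comp_sub_left (fun p => p ^ t)]

end Integrals

end

theorem stmt_9_general (c : ℝ) (hc0 : 0 < c) {U : Type*} [DecidableEq U]
    (f : Finset U → ℝ)
    (hnorm : f ∅ = 0)
    (hmono : ∀ A B : Finset U, A ⊆ B → f A ≤ f B)
    (hsub : ∀ A B : Finset U, f A + f B ≥ f (A ∪ B) + f (A ∩ B))
    (A : Finset U) :
    f A ≤ gfun c f A ∧
      gfun c f A ≤ c * Real.exp c / (Real.exp c - 1) * harm A.card * f A := by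
  have hw := expDensity_nonneg hc0.le
  have hf₀ : ∀ B, 0 ≤ f B := fun B => hnorm ▸ hmono ∅ B (empty_subset B)
  have hint : IntervalIntegrable (fun p => expDensity c p * gIntegrand p f A) volume 0 1 :=
    Continuous.intervalIntegrable (by fun_prop) _ _
  rw [gfun_eq_integral]
  constructor
  · calc f A = ∫ p in (0 : ℝ)..1, expDensity c p * f A := by
          rw [intervalIntegral.integral_mul_const, integral_expDensity hc0.ne', one_mul]
      _ ≤ ∫ p in (0 : ℝ)..1, expDensity c p * gIntegrand p f A :=
          intervalIntegral.integral_mono_on zero_le_one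
            (Continuous.intervalIntegrable (by fun_prop) _ _) hint
            fun p hp => mul_le_mul_of_nonneg_left (le_gIntegrand hsub hnorm hp.1 hp.2 A) (hw p)
  · calc ∫ p in (0 : ℝ)..1, expDensity c p * gIntegrand p f A
        ≤ ∫ p in (0 : ℝ)..1, expDensity c 1 * f A * ∑ t ∈ range A.card, (1 - p) ^ t :=
          intervalIntegral.integral_mono_on zero_le_one hint
            (Continuous.intervalIntegrable (by fun_prop) _ _) fun p hp => by
            have := mul_le_mul (monotone_expDensity hc0.le hp.2)
              (gIntegrand_le hp.1 hp.2 fun B hB => hmono B A hB)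
              (gIntegrand_nonneg hp.1 hp.2 fun B _ => hf₀ B) (hw 1)
            linarith
      _ = c * Real.exp c / (Real.exp c - 1) * harm A.card * f A := by
          rw [intervalIntegral.integral_const_mul, integral_geom_sum_one_sub, expDensity, mul_one]
          ring

theorem stmt_9 (c : ℝ) (hc0 : 0 < c) (hc1 : c ≤ 1) {U : Type*} [Fintype U] [DecidableEq U]
    (f : Finset U → ℝ)
    (hnorm : f ∅ = 0)
    (hmono : ∀ A B : Finset U, A ⊆ B → f A ≤ f B)
    (hsub : ∀ A B : Finset U, f A + f B ≥ f (A ∪ B) + f (A ∩ B))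
    (A : Finset U) :
    f A ≤ gfun c f A ∧
      gfun c f A ≤ c * Real.exp c / (Real.exp c - 1) * harm A.card * f A :=
  stmt_9_general c hc0 f hnorm hmono hsub A
end

section
/- Let f be normalized, monotone, and submodular on a finite set U, and let c ∈ (0,1]. Let A = {a_1,…,a_r} ⊆ U be a set of r distinct elements. Then ∑_{i=1}^r [g(A) − g(A − a_i)] + c·∑_{T ⊆ A} m_{|A|,|T|} f(T) = (c e^c/(e^c−1)) f(A), where g(A) = ∑_{B ⊆ A} m_{|A|−1,|B|−1} f(B). -/
open MeasureTheory Real Finset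

/-!
Expanding both sides in the values `f B`, `B ⊆ A`: the sets `A.erase x` contain `B` for exactly
`|A \ B|` choices of `x`, so the coefficient of `f B` on the left is
`|A| m_{|A|-1,|B|-1} - |A \ B| m_{|A|-2,|B|-1} + c m_{|A|,|B|}`.
With `m_{k+j,k} = c / (e^c - 1) ∫₀¹ e^{cp} p^k (1-p)^j dp`, integrating
`e^{cp} p^b (1-p)^{a-b}` by parts and using `p^k (1-p)^j = p^k (1-p)^{j+1} + p^{k+1} (1-p)^j`
shows that this coefficient is `c e^c / (e^c - 1)` for `B = A` and `0` for every other nonempty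
`B`; the term of `B = ∅` is killed by `f ∅ = 0`.
-/

noncomputable def expBeta (c : ℝ) (k j : ℕ) : ℝ :=
  ∫ p in (0:ℝ)..1, exp (c * p) * p ^ k * (1 - p) ^ j

lemma intervalIntegrable_expBeta_integrand (c : ℝ) (k j : ℕ) :
    IntervalIntegrable (fun p : ℝ => exp (c * p) * p ^ k * (1 - p) ^ j) volume 0 1 :=
  (by fun_prop : Continuous fun p : ℝ => exp (c * p) * p ^ k * (1 - p) ^ j).intervalIntegrable _ _

lemma expBeta_succ_add_succ (c : ℝ) (k j : ℕ) :
    expBeta c k (j + 1) + expBeta c (k + 1) j = expBeta c k j := by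
  rw [expBeta, expBeta, expBeta, ← intervalIntegral.integral_add
    (intervalIntegrable_expBeta_integrand c k (j + 1))
    (intervalIntegrable_expBeta_integrand c (k + 1) j)]
  exact intervalIntegral.integral_congr fun p _ => by ring

/-- Integration by parts: the boundary term `exp (c p) p^(k+1) (1-p)^j` vanishes at `0`
and equals `exp c * 0 ^ j` at `1`. -/
lemma expBeta_by_parts (c : ℝ) (k j : ℕ) :
    c * expBeta c (k + 1) j + (k + 1) * expBeta c k j - j * expBeta c (k + 1) (j - 1)
      = exp c * 0 ^ j := by
  have hderiv : ∀ p ∈ Set.uIcc (0:ℝ) 1,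
      HasDerivAt (fun p : ℝ => exp (c * p) * p ^ (k + 1) * (1 - p) ^ j)
        (c * (exp (c * p) * p ^ (k + 1) * (1 - p) ^ j)
          + (k + 1) * (exp (c * p) * p ^ k * (1 - p) ^ j)
          - j * (exp (c * p) * p ^ (k + 1) * (1 - p) ^ (j - 1))) p := by
    intro p _
    have hexp : HasDerivAt (fun p : ℝ => exp (c * p)) (exp (c * p) * c) p := by
      simpa using ((hasDerivAt_id p).const_mul c).exp
    have hpow : HasDerivAt (fun p : ℝ => p ^ (k + 1)) ((k + 1 : ℕ) * p ^ k) p := by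
      simpa using hasDerivAt_pow (k + 1) p
    have hcompl : HasDerivAt (fun p : ℝ => (1 - p) ^ j) (j * (1 - p) ^ (j - 1) * (-1)) p :=
      ((hasDerivAt_id p).const_sub 1).pow j
    refine ((hexp.fun_mul hpow).fun_mul hcompl).congr_deriv ?_
    push_cast
    ring
  have hE := intervalIntegrable_expBeta_integrand c
  have hFTC := intervalIntegral.integral_eq_sub_of_hasDerivAt hderiv
    ((((hE (k + 1) j).const_mul c).add ((hE k j).const_mul _)).sub
      ((hE (k + 1) (j - 1)).const_mul _))
  rw [intervalIntegral.integral_sub (((hE (k + 1) j).const_mul c).add ((hE k j).const_mul _))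
      ((hE (k + 1) (j - 1)).const_mul _),
    intervalIntegral.integral_add ((hE (k + 1) j).const_mul c) ((hE k j).const_mul _),
    intervalIntegral.integral_const_mul, intervalIntegral.integral_const_mul,
    intervalIntegral.integral_const_mul] at hFTC
  simpa [expBeta] using hFTC

lemma mcoef_natCast_add (c : ℝ) (k j : ℕ) :
    mcoef c ((k : ℤ) + j) k = c / (exp c - 1) * expBeta c k j := by
  rw [mcoef, if_neg (by omega), expBeta, ← intervalIntegral.integral_const_mul]
  refine intervalIntegral.integral_congr fun p _ => ?_
  simp only [Int.toNat_natCast, add_sub_cancel_left]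
  ring

lemma mcoef_recurrence (c : ℝ) {a b : ℕ} (hb : 1 ≤ b) (hba : b ≤ a) :
    a * mcoef c (a - 1) (b - 1) - (a - b : ℕ) * mcoef c (a - 2) (b - 1) + c * mcoef c a b
      = if b = a then c * exp c / (exp c - 1) else 0 := by
  obtain ⟨k, rfl⟩ := Nat.exists_eq_add_of_le' hb
  obtain ⟨j, rfl⟩ := Nat.exists_eq_add_of_le hba
  set s := c / (exp c - 1)
  have hprev :
      mcoef c ((k + 1 + j : ℕ) - 1 : ℤ) ((k + 1 : ℕ) - 1 : ℤ) = s * expBeta c k j := by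
    rw [← mcoef_natCast_add]; congr 1 <;> omega
  have hcur : mcoef c (k + 1 + j : ℕ) (k + 1 : ℕ) = s * expBeta c (k + 1) j := by
    rw [← mcoef_natCast_add, Nat.cast_add]
  have hparts := expBeta_by_parts c k j
  rw [hprev, hcur, Nat.add_sub_cancel_left]
  rcases j with _ | j
  · simp only [add_zero, CharP.cast_eq_zero, zero_mul, sub_zero, pow_zero] at hparts ⊢
    push_cast
    linear_combination s * hparts
  · have hprev2 : mcoef c ((k + 1 + (j + 1) : ℕ) - 2 : ℤ) ((k + 1 : ℕ) - 1 : ℤ)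
        = s * expBeta c k j := by
      rw [← mcoef_natCast_add]; congr 1 <;> omega
    rw [hprev2, if_neg (by omega)]
    simp only [add_tsub_cancel_right, ne_eq, Nat.add_one_ne_zero, not_false_eq_true,
      zero_pow, mul_zero] at hparts
    push_cast at hparts ⊢
    linear_combination s * hparts + (j + 1 : ℝ) * s * expBeta_succ_add_succ c k j

section Marginals

variable {U : Type*} [DecidableEq U]

lemma sum_gfun_erase (c : ℝ) (f : Finset U → ℝ) (A : Finset U) :
    ∑ x ∈ A, gfun c f (A.erase x) =
      ∑ B ∈ A.powerset,
        ((A.card - B.card : ℕ) : ℝ) * (mcoef c (A.card - 2) (B.card - 1) * f B) :=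
  calc ∑ x ∈ A, gfun c f (A.erase x)
      = ∑ x ∈ A, ∑ B ∈ (A.erase x).powerset, mcoef c (A.card - 2) (B.card - 1) * f B := by
        refine sum_congr rfl fun x hx => ?_
        rw [gfun, card_erase_of_mem hx, Nat.cast_sub (card_pos.2 ⟨x, hx⟩)]
        ring_nf
    _ = ∑ B ∈ A.powerset, ∑ x ∈ A \ B, mcoef c (A.card - 2) (B.card - 1) * f B :=
        sum_comm' fun x B => by simp only [mem_powerset, subset_erase, mem_sdiff]; tauto
    _ = _ := by
        refine sum_congr rfl fun B hB => ?_
        rw [sum_const, card_sdiff_of_subset (mem_powerset.1 hB), nsmul_eq_mul]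

lemma sum_gfun_sub_gfun_erase (c : ℝ) (f : Finset U → ℝ) (A : Finset U) :
    ∑ x ∈ A, (gfun c f A - gfun c f (A.erase x)) =
      ∑ B ∈ A.powerset, (A.card * mcoef c (A.card - 1) (B.card - 1)
        - (A.card - B.card : ℕ) * mcoef c (A.card - 2) (B.card - 1)) * f B := by
  rw [sum_sub_distrib, sum_gfun_erase, sum_const, nsmul_eq_mul, gfun, mul_sum,
    ← sum_sub_distrib]
  exact sum_congr rfl fun B _ => by ring

lemma gfun_coeff_mul_eq_ite (c : ℝ) {f : Finset U → ℝ} (hnorm : f ∅ = 0) {A B : Finset U}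
    (hBA : B ⊆ A) :
    (A.card * mcoef c (A.card - 1) (B.card - 1)
        - (A.card - B.card : ℕ) * mcoef c (A.card - 2) (B.card - 1)) * f B
      + c * (mcoef c A.card B.card * f B)
      = if B = A then c * exp c / (exp c - 1) * f A else 0 := by
  rcases B.eq_empty_or_nonempty with rfl | hB
  · split_ifs with h
    · subst h; simp [hnorm]
    · simp [hnorm]
  · have hcard : B = A ↔ B.card = A.card :=
      ⟨fun h => h ▸ rfl, fun h => eq_of_subset_of_card_le hBA h.ge⟩
    calc _ = (A.card * mcoef c (A.card - 1) (B.card - 1)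
          - (A.card - B.card : ℕ) * mcoef c (A.card - 2) (B.card - 1)
          + c * mcoef c A.card B.card) * f B := by ring
      _ = _ := by
        rw [mcoef_recurrence c hB.card_pos (card_le_card hBA)]
        simp only [← hcard]
        split_ifs with h
        · rw [h]
        · rw [zero_mul]

lemma sum_gfun_sub_gfun_erase_add (c : ℝ) {f : Finset U → ℝ} (hnorm : f ∅ = 0)
    (A : Finset U) :
    ∑ x ∈ A, (gfun c f A - gfun c f (A.erase x)) +
        c * ∑ T ∈ A.powerset, mcoef c A.card T.card * f T =
      c * exp c / (exp c - 1) * f A := by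
  rw [sum_gfun_sub_gfun_erase, mul_sum, ← sum_add_distrib,
    sum_congr rfl fun B hB => gfun_coeff_mul_eq_ite c hnorm (mem_powerset.1 hB),
    sum_ite_eq', if_pos (mem_powerset_self A)]

end Marginals

theorem stmt_16_general (c : ℝ) {U : Type*} [DecidableEq U]
    (f : Finset U → ℝ)
    (hnorm : f ∅ = 0)
    (r : ℕ) (a : Fin r → U) (ha : Function.Injective a)
    (A : Finset U) (hA : A = Finset.image a Finset.univ) :
    ∑ i : Fin r, (gfun c f A - gfun c f (A.erase (a i))) +
        c * ∑ T ∈ A.powerset, mcoef c (A.card : ℤ) (T.card : ℤ) * f T =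
      c * Real.exp c / (Real.exp c - 1) * f A := by
  have hreindex : ∑ i : Fin r, (gfun c f A - gfun c f (A.erase (a i))) =
      ∑ x ∈ A, (gfun c f A - gfun c f (A.erase x)) := by
    rw [hA, sum_image ha.injOn]
  rw [hreindex]
  exact sum_gfun_sub_gfun_erase_add c hnorm A

theorem stmt_16 (c : ℝ) (hc0 : 0 < c) (hc1 : c ≤ 1) {U : Type*} [DecidableEq U]
    (f : Finset U → ℝ)
    (hnorm : f ∅ = 0)
    (hmono : ∀ A B : Finset U, A ⊆ B → f A ≤ f B)
    (hsub : ∀ A B : Finset U, f A + f B ≥ f (A ∪ B) + f (A ∩ B))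
    (r : ℕ) (a : Fin r → U) (ha : Function.Injective a)
    (A : Finset U) (hA : A = Finset.image a Finset.univ) :
    ∑ i : Fin r, (gfun c f A - gfun c f (A.erase (a i))) +
        c * ∑ T ∈ A.powerset, mcoef c (A.card : ℤ) (T.card : ℤ) * f T =
      c * Real.exp c / (Real.exp c - 1) * f A :=
  stmt_16_general c f hnorm r a ha A hA
end
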